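/- arXiv:2502.13424 — 2 statements merged into one kernel-verified Lean document; each statement's English description precedes it below -/
import Mathlib

section
/- The bitwise OR (superposition) of two distinct extended-IDs is never itself an extended-ID: if u ≠ v are IDs in [0, 2^k), then the coordinatewise OR of the extended-ID of u and the extended-ID of v has strictly more than k ones, and hence equals no extended-ID. -/
/-!
Positions `i` and `k + i` of an extended-ID carry complementary bits, so each of the `k` pairs
contributes exactly one `1`. In the OR of two extended-IDs every pair contributes at least one
`1`, and a pair at which `u` and `v` differ contributes two; such a position exists below `k`
because both IDs are less than `2 ^ k`.
-/

/-- The extended-ID of an ID `v` with parameter `k` (`n = 2^k`). -/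
def extId (k v : ℕ) : Fin (2 * k) → Bool :=
  fun i => if (i : ℕ) < k then v.testBit i else !(v.testBit ((i : ℕ) - k))

open Finset

theorem Nat.exists_testBit_ne_of_lt_two_pow {k u v : ℕ} (hu : u < 2 ^ k) (hv : v < 2 ^ k)
    (huv : u ≠ v) : ∃ j < k, u.testBit j ≠ v.testBit j := by
  obtain ⟨j, hj⟩ := Nat.exists_testBit_ne_of_ne huv
  refine ⟨j, lt_of_not_ge fun hkj => hj ?_, hj⟩
  have hpow : 2 ^ k ≤ 2 ^ j := Nat.pow_le_pow_right two_pos hkj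
  rw [Nat.testBit_lt_two_pow (hu.trans_le hpow), Nat.testBit_lt_two_pow (hv.trans_le hpow)]

theorem card_filter_fin_two_mul (k : ℕ) (f : ℕ → Bool) :
    #{i : Fin (2 * k) | f i = true} = ∑ i ∈ range k, ((f i).toNat + (f (k + i)).toNat) := by
  rw [card_filter, Fin.sum_univ_eq_sum_range (fun i => if f i = true then 1 else 0), two_mul,
    sum_range_add, ← sum_add_distrib]
  simp only [Bool.toNat, cond_eq_ite]

/-- `extId k v` as a function on `ℕ`, so that position `k + i` needs no bound proof. -/
def extBits (k v i : ℕ) : Bool :=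
  if i < k then v.testBit i else !v.testBit (i - k)

theorem extBits_of_lt {k v i : ℕ} (hi : i < k) : extBits k v i = v.testBit i := if_pos hi

theorem extBits_add_left (k v i : ℕ) : extBits k v (k + i) = !v.testBit i := by
  simp [extBits]

theorem card_extId (k w : ℕ) : #{i | extId k w i = true} = k := by
  calc #{i | extId k w i = true}
      = ∑ i ∈ range k, ((extBits k w i).toNat + (extBits k w (k + i)).toNat) :=
        card_filter_fin_two_mul k (extBits k w)
    _ = ∑ _i ∈ range k, 1 := sum_congr rfl fun i hi => by
        rw [extBits_of_lt (mem_range.1 hi), extBits_add_left]; cases w.testBit i <;> rfl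
    _ = k := by simp

theorem lt_card_extId_or {k u v : ℕ} (hu : u < 2 ^ k) (hv : v < 2 ^ k) (huv : u ≠ v) :
    k < #{i | (extId k u i || extId k v i) = true} := by
  obtain ⟨j, hjk, hj⟩ := Nat.exists_testBit_ne_of_lt_two_pow hu hv huv
  have hpair (i) (hi : i ∈ range k) :
      (extBits k u i || extBits k v i).toNat + (extBits k u (k + i) || extBits k v (k + i)).toNat
        = if u.testBit i = v.testBit i then 1 else 2 := by
    rw [extBits_of_lt (mem_range.1 hi), extBits_of_lt (mem_range.1 hi), extBits_add_left,
      extBits_add_left]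
    cases u.testBit i <;> cases v.testBit i <;> rfl
  calc k = ∑ _i ∈ range k, 1 := by simp
    _ < ∑ i ∈ range k, if u.testBit i = v.testBit i then 1 else 2 :=
        sum_lt_sum (fun i _ => by split_ifs <;> simp) ⟨j, mem_range.2 hjk, by simp [hj]⟩
    _ = #{i | (extId k u i || extId k v i) = true} :=
        ((card_filter_fin_two_mul k _).trans (sum_congr rfl hpair)).symm

/-- The coordinatewise OR of two distinct extended-IDs has strictly more than `k`
ones, hence is not an extended-ID. -/
theorem or_of_two_extIds_not_extId (k : ℕ) (u v : ℕ) (hu : u < 2 ^ k) (hv : v < 2 ^ k)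
    (huv : u ≠ v) :
    k < (Finset.univ.filter fun i : Fin (2 * k) => (extId k u i || extId k v i) = true).card ∧
    ∀ w, w < 2 ^ k → (fun i => extId k u i || extId k v i) ≠ extId k w := by
  have hlt := lt_card_extId_or hu hv huv
  refine ⟨hlt, fun w _ hw => ?_⟩
  simp only [funext_iff] at hw
  simp only [hw, card_extId, lt_irrefl] at hlt
end

section
/- A random construction yields strong selectors of size O(k^2 log n): for all sufficiently large n and 2 ≤ k ≤ n, there exists a family F of subsets of [n] with |F| ≤ C·k^2·log n (for some absolute constant C) such that for every S ⊆ [n] with |S| ≤ k and every a ∈ S, some F ∈ F satisfies F ∩ S = {a}. -/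
/-!
Colour `[n]` uniformly at random with `k` colours and take the class of colour `0`. For
`a ∈ S` with `#S = s ≤ k`, that class meets `S` exactly in `{a}` with probability
`(1/k) (1 - 1/k)^(s-1) ≥ 1/(3k)`, because `(1 + 1/(k-1))^(k-1) ≤ e < 3`. With
`m = 9 k² log₂ n` independent colourings a fixed pair `(S, a)` is missed by all of them with
probability at most `(1 - 1/(3k))^m ≤ 2^(-3k log₂ n)`, while there are at most `(k+1) n^(k+1)`
pairs; by the union bound some choice of `m` colourings selects every pair.
-/

open Finset

def IsStrongSelector {β : Type*} [DecidableEq β] (U : Finset β) (F : Finset (Finset β))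
    (k : ℕ) : Prop :=
  ∀ S ⊆ U, #S ≤ k → ∀ a ∈ S, ∃ f ∈ F, f ∩ S = {a}

theorem IsStrongSelector.map {β γ : Type*} [DecidableEq β] [DecidableEq γ] {U : Finset β}
    {F : Finset (Finset β)} {k : ℕ} (hF : IsStrongSelector U F k) (e : β ↪ γ) :
    IsStrongSelector (U.map e) (F.map (mapEmbedding e).toEmbedding) k := by
  intro S hSU hS a ha
  obtain ⟨T, hTU, rfl⟩ := subset_map_iff.1 hSU
  obtain ⟨b, hb, rfl⟩ := mem_map.1 ha
  obtain ⟨f, hf, hfT⟩ := hF T hTU (by simpa using hS) b hb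
  exact ⟨f.map e, mem_map_of_mem _ hf, by rw [← map_inter, hfT, map_singleton]⟩

theorem pow_le_three_mul_pred_pow {r j : ℕ} (hj : j < r) : r ^ j ≤ 3 * (r - 1) ^ j := by
  obtain ⟨s, rfl⟩ : ∃ s, r = s + 1 := ⟨r - 1, by omega⟩
  rcases Nat.eq_zero_or_pos s with rfl | hs
  · simp [show j = 0 by omega]
  rw [Nat.add_sub_cancel, ← Nat.cast_le (α := ℝ), Nat.cast_pow]
  have hs' : (0 : ℝ) < s := by exact_mod_cast hs
  have hsplit : ((s + 1 : ℕ) : ℝ) = s * (1 + (s : ℝ)⁻¹) := by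
    push_cast; field_simp
  calc ((s + 1 : ℕ) : ℝ) ^ j = (s : ℝ) ^ j * (1 + (s : ℝ)⁻¹) ^ j := by
        rw [hsplit, mul_pow]
    _ ≤ (s : ℝ) ^ j * (1 + (s : ℝ)⁻¹) ^ s := by
        gcongr
        · exact le_add_of_nonneg_right (by positivity)
        · omega
    _ ≤ (s : ℝ) ^ j * Real.exp 1 := by gcongr; exact Real.one_add_inv_pow_le_exp
    _ ≤ (s : ℝ) ^ j * 3 := by gcongr; linarith [Real.exp_one_lt_d9]
    _ = ((3 * s ^ j : ℕ) : ℝ) := by push_cast; ring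

section
variable {β α : Type*} [DecidableEq α]

def colorClass [Fintype β] (h : β → α) (c : α) : Finset β := {x | h x = c}

theorem colorClass_inter_eq_singleton_iff [Fintype β] [DecidableEq β] {h : β → α} {c : α}
    {S : Finset β} {a : β} (ha : a ∈ S) :
    colorClass h c ∩ S = {a} ↔ ∀ x ∈ S, (h x = c ↔ x = a) := by
  simp only [Finset.ext_iff, colorClass, mem_inter, mem_filter, mem_univ, true_and,
    mem_singleton]
  grind

variable [Fintype β] [DecidableEq β] [Fintype α]

theorem card_colorClass_inter_eq_singleton {c : α} {S : Finset β} {a : β} (ha : a ∈ S) :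
    #{h : β → α | colorClass h c ∩ S = {a}} =
      (Fintype.card α - 1) ^ (#S - 1) * Fintype.card α ^ (Fintype.card β - #S) := by
  have hpi : ({h : β → α | colorClass h c ∩ S = {a}} : Finset _) = Fintype.piFinset
      fun x => if x ∈ S then (if x = a then {c} else univ.erase c) else univ := by
    ext h
    simp only [mem_filter, mem_univ, true_and, Fintype.mem_piFinset,
      colorClass_inter_eq_singleton_iff ha]
    refine forall_congr' fun x => ?_
    split_ifs <;> simp_all
  rw [hpi, Fintype.card_piFinset]
  simp only [apply_ite card, prod_ite, card_univ, prod_const, filter_mem_eq_inter, univ_inter]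
  simp [filter_ne', card_erase_of_mem ha, filter_notMem_eq_sdiff,
    card_sdiff_of_subset (subset_univ S)]

theorem card_colorClass_inter_ne_singleton_le {c : α} {S : Finset β} {a : β} (ha : a ∈ S)
    (hS : #S ≤ Fintype.card α) :
    (#{h : β → α | colorClass h c ∩ S ≠ {a}} : ℝ) ≤
      (1 - 1 / (3 * Fintype.card α)) * Fintype.card (β → α) := by
  set r := Fintype.card α
  have hS₁ : 1 ≤ #S := card_pos.2 ⟨a, ha⟩
  have hr : (0 : ℝ) < r := by exact_mod_cast hS₁.trans hS
  have hgood : r ^ Fintype.card β ≤ 3 * r * #{h : β → α | colorClass h c ∩ S = {a}} := by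
    have hSβ : #S ≤ Fintype.card β := card_le_univ S
    rw [card_colorClass_inter_eq_singleton ha]
    calc r ^ Fintype.card β = r ^ (#S - 1) * r * r ^ (Fintype.card β - #S) := by
          rw [← pow_succ, ← pow_add]; congr 1; omega
      _ ≤ 3 * (r - 1) ^ (#S - 1) * r * r ^ (Fintype.card β - #S) := by
          gcongr; exact pow_le_three_mul_pred_pow (by omega)
      _ = _ := by ring
  have hsplit := card_filter_add_card_filter_not (s := (univ : Finset (β → α)))
    (fun h => colorClass h c ∩ S = {a})
  simp only [card_univ, Fintype.card_fun, ← ne_eq] at hsplit ⊢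
  have hgood' :
      (r : ℝ) ^ Fintype.card β / (3 * r) ≤ #{h : β → α | colorClass h c ∩ S = {a}} := by
    rw [div_le_iff₀ (by positivity)]
    exact_mod_cast hgood.trans_eq (mul_comm _ _)
  calc (#{h : β → α | colorClass h c ∩ S ≠ {a}} : ℝ)
      = r ^ Fintype.card β - #{h : β → α | colorClass h c ∩ S = {a}} := by
        rw [eq_sub_iff_add_eq']; exact_mod_cast hsplit
    _ ≤ r ^ Fintype.card β - r ^ Fintype.card β / (3 * r) := by gcongr
    _ = (1 - 1 / (3 * r)) * ((r ^ Fintype.card β : ℕ) : ℝ) := by push_cast; ring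

end

theorem card_filter_card_le_le {β : Type*} [Fintype β] (k : ℕ) (hβ : 0 < Fintype.card β) :
    #{T : Finset β | #T ≤ k} ≤ (k + 1) * Fintype.card β ^ k := by
  classical
  calc #{T : Finset β | #T ≤ k} ≤ ∑ j ∈ range (k + 1), (Fintype.card β).choose j := by
        simp_rw [← card_univ (α := β), ← card_powersetCard]
        refine (card_le_card fun T hT ↦ mem_biUnion.2 ⟨#T, ?_⟩).trans card_biUnion_le
        simp only [mem_filter, mem_univ, true_and] at hT
        exact ⟨mem_range.2 (by omega), mem_powersetCard_univ.2 rfl⟩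
    _ ≤ ∑ j ∈ range (k + 1), Fintype.card β ^ k := sum_le_sum fun j hj =>
        (Nat.choose_le_pow _ _).trans
          (Nat.pow_le_pow_right hβ (by simpa [Nat.lt_succ_iff] using hj))
    _ = (k + 1) * Fintype.card β ^ k := by simp

theorem exists_forall_mem_exists_of_card_mul_pow_lt_one {ι Ω : Type*} [Fintype Ω] [Nonempty Ω]
    (J : Finset ι) (P : ι → Ω → Prop) [∀ j, DecidablePred (P j)] (p : ℝ) (m : ℕ)
    (hP : ∀ j ∈ J, (#{ω | ¬ P j ω} : ℝ) ≤ p * Fintype.card Ω) (hJ : #J * p ^ m < 1) :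
    ∃ g : Fin m → Ω, ∀ j ∈ J, ∃ i, P j (g i) := by
  classical
  let bad : Finset (Fin m → Ω) := J.biUnion fun j => Fintype.piFinset fun _ => {ω | ¬ P j ω}
  have hbad : (#bad : ℝ) < #(univ : Finset (Fin m → Ω)) := by
    calc (#bad : ℝ) ≤ ∑ j ∈ J, (#{ω | ¬ P j ω} : ℝ) ^ m := by
          exact_mod_cast card_biUnion_le.trans_eq (by simp [Fintype.card_piFinset])
      _ ≤ ∑ j ∈ J, (p * Fintype.card Ω) ^ m :=
          sum_le_sum fun j hj => by gcongr; exact hP j hj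
      _ = #J * p ^ m * (Fintype.card Ω : ℝ) ^ m := by simp [mul_pow, mul_assoc]
      _ < 1 * (Fintype.card Ω : ℝ) ^ m := by gcongr
      _ = #(univ : Finset (Fin m → Ω)) := by simp
  obtain ⟨g, -, hg⟩ := exists_mem_notMem_of_card_lt_card (by exact_mod_cast hbad)
  refine ⟨g, fun j hj => ?_⟩
  by_contra! h
  exact hg (mem_biUnion.2 ⟨j, hj, Fintype.mem_piFinset.2 fun i => by simpa using h i⟩)

theorem succ_mul_pow_lt_two_pow {n k : ℕ} (hn : 16 ≤ n) (hk : 2 ≤ k) :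
    (k + 1) * n ^ (k + 1) < 2 ^ (3 * k * Nat.log 2 n) := by
  set L := Nat.log 2 n
  have hL : 4 ≤ L := Nat.le_log_of_pow_le one_lt_two (by omega)
  calc (k + 1) * n ^ (k + 1) < 2 ^ k * (2 ^ (L + 1)) ^ (k + 1) :=
        Nat.mul_lt_mul_of_le_of_lt Nat.lt_two_pow_self
          (Nat.pow_lt_pow_left (Nat.lt_pow_succ_log_self one_lt_two n) (by omega)) (by positivity)
    _ = 2 ^ (k + (L + 1) * (k + 1)) := by ring
    _ ≤ 2 ^ (3 * k * L) := Nat.pow_le_pow_right two_pos (by nlinarith)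

theorem one_sub_one_div_pow_le_half {j : ℕ} (hj : 0 < j) : (1 - 1 / (j : ℝ)) ^ j ≤ 1 / 2 := by
  calc (1 - 1 / (j : ℝ)) ^ j ≤ Real.exp (-1) :=
        Real.one_sub_div_pow_le_exp_neg (by exact_mod_cast hj)
    _ ≤ 1 / 2 := by
        rw [Real.exp_neg, one_div]
        gcongr
        linarith [Real.add_one_le_exp 1]

theorem cast_mul_one_sub_pow_lt_one {n k N : ℕ} (hn : 16 ≤ n) (hk : 2 ≤ k)
    (hN : N ≤ (k + 1) * n ^ (k + 1)) :
    (N : ℝ) * (1 - 1 / (3 * k)) ^ (9 * k ^ 2 * Nat.log 2 n) < 1 := by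
  have hp : 0 ≤ 1 - 1 / (3 * k : ℝ) := by
    rw [sub_nonneg, div_le_one (by positivity)]; norm_cast; omega
  have hpow : (1 - 1 / (3 * k : ℝ)) ^ (9 * k ^ 2 * Nat.log 2 n) ≤
      (1 / 2) ^ (3 * k * Nat.log 2 n) := by
    rw [show 9 * k ^ 2 * Nat.log 2 n = 3 * k * (3 * k * Nat.log 2 n) by ring, pow_mul]
    gcongr
    exact_mod_cast one_sub_one_div_pow_le_half (j := 3 * k) (by omega)
  have hlt : (N : ℝ) < 2 ^ (3 * k * Nat.log 2 n) := by
    exact_mod_cast hN.trans_lt (succ_mul_pow_lt_two_pow hn hk)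
  calc (N : ℝ) * (1 - 1 / (3 * k)) ^ (9 * k ^ 2 * Nat.log 2 n)
      ≤ N * (1 / 2) ^ (3 * k * Nat.log 2 n) := by gcongr
    _ < 2 ^ (3 * k * Nat.log 2 n) * (1 / 2) ^ (3 * k * Nat.log 2 n) := by gcongr
    _ = 1 := by rw [← mul_pow]; norm_num

theorem exists_isStrongSelector_univ_card_le {n k : ℕ} (hn : 16 ≤ n) (hk : 2 ≤ k) :
    ∃ F : Finset (Finset (Fin n)),
      #F ≤ 9 * k ^ 2 * Nat.log 2 n ∧ IsStrongSelector univ F k := by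
  classical
  have : NeZero k := ⟨by omega⟩
  let J : Finset (Finset (Fin n) × Fin n) := {Sa | #Sa.1 ≤ k ∧ Sa.2 ∈ Sa.1}
  have hJ : #J ≤ (k + 1) * n ^ (k + 1) := by
    have hsub : J ⊆ ({T : Finset (Fin n) | #T ≤ k} : Finset _) ×ˢ (univ : Finset (Fin n)) :=
      fun Sa hSa => by
        simp only [J, mem_filter] at hSa
        simp [hSa.2.1]
    calc #J ≤ #({T : Finset (Fin n) | #T ≤ k} : Finset _) * n := by
          simpa using card_le_card hsub
      _ ≤ (k + 1) * n ^ k * n := by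
          gcongr
          simpa using card_filter_card_le_le (β := Fin n) k (by simp; omega)
      _ = (k + 1) * n ^ (k + 1) := by ring
  have hbad : ∀ Sa ∈ J, (#{h : Fin n → Fin k | colorClass h 0 ∩ Sa.1 ≠ {Sa.2}} : ℝ) ≤
      (1 - 1 / (3 * k)) * Fintype.card (Fin n → Fin k) := fun Sa hSa => by
    simp only [J, mem_filter] at hSa
    simpa using card_colorClass_inter_ne_singleton_le (c := (0 : Fin k)) hSa.2.2
      (by simpa using hSa.2.1)
  obtain ⟨g, hg⟩ := exists_forall_mem_exists_of_card_mul_pow_lt_one J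
    (fun Sa (h : Fin n → Fin k) => colorClass h 0 ∩ Sa.1 = {Sa.2}) _ _ hbad
    (cast_mul_one_sub_pow_lt_one hn hk hJ)
  refine ⟨univ.image fun i => colorClass (g i) 0, card_image_le.trans (by simp),
    fun S _ hS a ha => ?_⟩
  obtain ⟨i, hi⟩ := hg (S, a) (by simp [J, hS, ha])
  exact ⟨_, mem_image_of_mem _ (mem_univ i), hi⟩

/-- There is an absolute constant `C` such that for all sufficiently large `n` and
all `2 ≤ k ≤ n` there exists an `(n,k)`-strong selector of size at most
`C * k^2 * log n`. -/
theorem exists_strong_selector :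
    ∃ C : ℕ, 0 < C ∧ ∃ N : ℕ, ∀ n ≥ N, ∀ k, 2 ≤ k → k ≤ n →
      ∃ F : Finset (Finset ℕ),
        (∀ f ∈ F, f ⊆ Finset.range n) ∧
        F.card ≤ C * k ^ 2 * Nat.log 2 n ∧
        ∀ S : Finset ℕ, S ⊆ Finset.range n → S.card ≤ k →
          ∀ a ∈ S, ∃ f ∈ F, f ∩ S = {a} := by
  refine ⟨9, by norm_num, 16, fun n hn k hk _ => ?_⟩
  obtain ⟨F, hcard, hF⟩ := exists_isStrongSelector_univ_card_le hn hk
  have hrange : (univ : Finset (Fin n)).map Fin.valEmbedding = range n := by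
    rw [Fin.map_valEmbedding_univ, Nat.Iio_eq_range]
  refine ⟨F.map (mapEmbedding Fin.valEmbedding).toEmbedding, ?_, (card_map _).trans_le hcard,
    hrange ▸ hF.map Fin.valEmbedding⟩
  simp only [mem_map, RelEmbedding.coe_toEmbedding, mapEmbedding_apply]
  rintro _ ⟨f, -, rfl⟩
  exact hrange ▸ map_subset_map.2 (subset_univ f)
end
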